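/- arXiv:2410.10475 — 4 statements merged into one kernel-verified Lean document; each statement's English description precedes it below -/
import Mathlib

section
/- A finite tournament with at least two vertices has exactly one king if and only if that king has an outgoing edge to every other vertex. -/
def IsTournament {V : Type*} (r : V → V → Prop) : Prop :=
  (∀ v, ¬ r v v) ∧ ∀ u v : V, u ≠ v → (r u v ↔ ¬ r v u)

def IsKing {V : Type*} (r : V → V → Prop) (v : V) : Prop :=
  ∀ u : V, u ≠ v → r v u ∨ ∃ w, r v w ∧ r w u

/-!
A vertex of maximum out-degree is a king: a vertex `u` it does not reach beats it and everything
it beats, so `u` would have larger out-degree. If the king `k` loses to some vertex, a king `m` of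
the subtournament of vertices beating `k` is a king of the whole tournament (it reaches `k` in one
step and everything beaten by `k` through `k`), so `k` is not the only king. Conversely, a vertex
beating all others is reached by no other vertex within two steps.
-/

namespace IsTournament

variable {V : Type*} {r : V → V → Prop}

theorem asymm (hT : IsTournament r) {u v : V} (h : r u v) : ¬ r v u := by
  obtain rfl | huv := eq_or_ne u v
  · exact hT.1 u
  · exact (hT.2 u v huv).mp h

theorem rel_of_not_rel (hT : IsTournament r) {u v : V} (huv : u ≠ v) (h : ¬ r v u) : r u v :=
  (hT.2 u v huv).mpr h

theorem comap {W : Type*} (hT : IsTournament r) {f : W → V} (hf : Function.Injective f) :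
    IsTournament (fun a b => r (f a) (f b)) :=
  ⟨fun a => hT.1 (f a), fun a b hab => hT.2 (f a) (f b) (hf.ne hab)⟩

theorem setOf_rel_ssubset_of_not_isKing (hT : IsTournament r) {v : V} (hv : ¬ IsKing r v) :
    ∃ u, {w | r v w} ⊂ {w | r u w} := by
  simp only [IsKing, not_forall, not_or, not_exists, not_and] at hv
  obtain ⟨u, huv, hvu, hreach⟩ := hv
  refine ⟨u, Set.ssubset_iff_of_subset (fun w hvw => ?_) |>.mpr ⟨v, ?_, hT.1 v⟩⟩
  · have hwu : w ≠ u := by rintro rfl; exact hvu hvw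
    exact hT.rel_of_not_rel (Ne.symm hwu) (hreach w hvw)
  · exact hT.rel_of_not_rel huv hvu

theorem isKing_of_forall_ncard_le [Finite V] (hT : IsTournament r) {v : V}
    (hmax : ∀ u, {w | r u w}.ncard ≤ {w | r v w}.ncard) : IsKing r v := by
  by_contra hv
  obtain ⟨u, hsub⟩ := hT.setOf_rel_ssubset_of_not_isKing hv
  exact (Set.ncard_lt_ncard hsub).not_ge (hmax u)

theorem exists_isKing [Finite V] [Nonempty V] (hT : IsTournament r) : ∃ k, IsKing r k := by
  obtain ⟨v, hv⟩ := Finite.exists_max fun v => {w | r v w}.ncard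
  exact ⟨v, hT.isKing_of_forall_ncard_le hv⟩

theorem isKing_of_isKing_setOf_rel (hT : IsTournament r) {k : V} {m : {v // r v k}}
    (hm : IsKing (fun a b : {v // r v k} => r a b) m) : IsKing r m := by
  intro x hxm
  by_cases hxk : r x k
  · obtain h | ⟨w, hmw, hwx⟩ := hm ⟨x, hxk⟩ (fun h => hxm (congrArg Subtype.val h))
    · exact .inl h
    · exact .inr ⟨w, hmw, hwx⟩
  · obtain rfl | hne := eq_or_ne x k
    · exact .inl m.2
    · exact .inr ⟨k, m.2, hT.rel_of_not_rel (Ne.symm hne) hxk⟩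

theorem exists_isKing_ne_of_not_forall_rel [Finite V] (hT : IsTournament r) {k : V}
    (hk : ¬ ∀ u, u ≠ k → r k u) : ∃ m, m ≠ k ∧ IsKing r m := by
  push Not at hk
  obtain ⟨u, huk, hku⟩ := hk
  have : Nonempty {v // r v k} := ⟨⟨u, hT.rel_of_not_rel huk hku⟩⟩
  obtain ⟨m, hm⟩ := (hT.comap (Subtype.val_injective (p := (r · k)))).exists_isKing
  refine ⟨m, ?_, hT.isKing_of_isKing_setOf_rel hm⟩
  intro hmk
  exact hT.1 k (by simpa [hmk] using m.2)

theorem eq_of_isKing_of_forall_rel (hT : IsTournament r) {k m : V}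
    (hk : ∀ u, u ≠ k → r k u) (hm : IsKing r m) : m = k := by
  by_contra hmk
  obtain h | ⟨w, -, hwk⟩ := hm k (Ne.symm hmk)
  · exact hT.asymm (hk m hmk) h
  · have hwk' : w ≠ k := by rintro rfl; exact hT.1 w hwk
    exact hT.asymm (hk w hwk') hwk

end IsTournament

theorem unique_king_iff_beats_all_general {V : Type*} [Fintype V]
    (r : V → V → Prop) (hT : IsTournament r) :
    (∃! k : V, IsKing r k) ↔ ∃ k : V, IsKing r k ∧ ∀ u : V, u ≠ k → r k u := by
  constructor
  · rintro ⟨k, hk, huniq⟩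
    refine ⟨k, hk, ?_⟩
    by_contra hbeats
    obtain ⟨m, hmk, hm⟩ := hT.exists_isKing_ne_of_not_forall_rel hbeats
    exact hmk (huniq m hm)
  · rintro ⟨k, hk, hbeats⟩
    exact ⟨k, hk, fun m hm => hT.eq_of_isKing_of_forall_rel hbeats hm⟩

theorem unique_king_iff_beats_all {V : Type*} [Fintype V]
    (r : V → V → Prop) (hT : IsTournament r) (hcard : 2 ≤ Fintype.card V) :
    (∃! k : V, IsKing r k) ↔ ∃ k : V, IsKing r k ∧ ∀ u : V, u ≠ k → r k u :=
  unique_king_iff_beats_all_general r hT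
end

section
/- Let T_n be a uniformly random tournament on n labeled vertices, i.e., for each pair of distinct vertices the orientation of the edge between them is chosen independently and uniformly at random. Then the probability that every vertex of T_n is a king tends to 1 as n tends to infinity. -/
/-- The tournament on `Fin n` determined by a choice of orientation (a Boolean) for each
unordered pair, encoded as the ordered pairs `p` with `p.1 < p.2`:
`true` orients the edge from the smaller to the larger index. -/
def tournamentOf {n : ℕ} (f : {p : Fin n × Fin n // p.1 < p.2} → Bool) :
    Fin n → Fin n → Prop :=
  fun u v => (∃ h : u < v, f ⟨(u, v), h⟩ = true) ∨ (∃ h : v < u, f ⟨(v, u), h⟩ = false)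
/-!
If `v` is not a king, some `u ≠ v` has no `w` with `v → w → u`. For fixed `u ≠ v` the events
`v → w → u`, `w ≠ u, v`, concern pairwise disjoint pairs of edges, so they fail simultaneously
with probability `(3/4) ^ (n - 2)`. A union bound over the at most `n ^ 2` pairs `(u, v)` shows that
some vertex is not a king with probability at most `n ^ 2 (3/4) ^ (n - 2) → 0`.
-/

open Function Finset Filter Topology

/-- Counting form of independence of the restrictions of `f` to the disjoint blocks
`pos (j, ·)`. -/
theorem ncard_forall_restrict_mem_mul_le {ι J κ α : Type*} [Fintype ι] [Fintype J] [Fintype κ]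
    [Fintype α] {pos : J × κ → ι} (hpos : Injective pos) (A : J → Set (κ → α)) :
    {f : ι → α | ∀ j, (fun k => f (pos (j, k))) ∈ A j}.ncard *
        Fintype.card α ^ (Fintype.card J * Fintype.card κ) ≤
      (∏ j, (A j).ncard) * Fintype.card α ^ Fintype.card ι := by
  have hinj : Nat.card {f : ι → α // ∀ j, (fun k => f (pos (j, k))) ∈ A j} ≤
      Nat.card ((∀ j, A j) × (↥(Set.range pos)ᶜ → α)) := by
    refine Nat.card_le_card_of_injective (fun f => (fun j => ⟨_, f.2 j⟩, fun i => f.1 i)) ?_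
    rintro ⟨f, hf⟩ ⟨g, hg⟩ h
    obtain ⟨hblocks, hrest⟩ := Prod.ext_iff.mp h
    ext i
    by_cases hi : i ∈ Set.range pos
    · obtain ⟨⟨j, k⟩, rfl⟩ := hi
      exact congrFun (congrArg Subtype.val (congrFun hblocks j)) k
    · exact congrFun hrest ⟨i, hi⟩
  have hcompl :
      Nat.card ↥(Set.range pos)ᶜ + Fintype.card J * Fintype.card κ = Fintype.card ι := by
    rw [← Fintype.card_prod, ← Nat.card_eq_fintype_card, ← Nat.card_range_of_injective hpos,
      Nat.card_coe_set_eq, Nat.card_coe_set_eq, add_comm, Set.ncard_add_ncard_compl,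
      Nat.card_eq_fintype_card]
  calc _ ≤ Nat.card ((∀ j, A j) × (↥(Set.range pos)ᶜ → α)) *
        Fintype.card α ^ (Fintype.card J * Fintype.card κ) := Nat.mul_le_mul_right _ hinj
    _ = _ := by
      rw [Nat.card_prod, Nat.card_pi, Nat.card_fun, Nat.card_eq_fintype_card (α := α), mul_assoc,
        ← pow_add, hcompl]
      simp only [Nat.card_coe_set_eq]

theorem tendsto_pow_const_mul_const_pow_sub_of_abs_lt_one (k m : ℕ) {r : ℝ} (hr₀ : r ≠ 0)
    (hr : |r| < 1) :
    Tendsto (fun n : ℕ => (n : ℝ) ^ k * r ^ (n - m)) atTop (𝓝 0) := by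
  have h := (tendsto_pow_const_mul_const_pow_of_abs_lt_one k hr).const_mul (r ^ m)⁻¹
  rw [mul_zero] at h
  refine h.congr' ((eventually_ge_atTop m).mono fun n hn => ?_)
  dsimp only
  rw [pow_sub₀ r hr₀ hn]
  ring

section Tournament

variable {n : ℕ}

abbrev Edge (n : ℕ) : Type := {p : Fin n × Fin n // p.1 < p.2}

lemma card_edge (n : ℕ) : Fintype.card (Edge n) = n.choose 2 := by
  rw [Fintype.card_subtype, Fintype.card_product_filter_lt, Fintype.card_fin]

lemma card_edge_fun (n : ℕ) : Nat.card (Edge n → Bool) = 2 ^ n.choose 2 := by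
  rw [Nat.card_eq_fintype_card, Fintype.card_fun, Fintype.card_bool, card_edge]

def edgeBetween {a b : Fin n} (hab : a ≠ b) : Edge n :=
  if h : a < b then ⟨(a, b), h⟩ else ⟨(b, a), hab.lt_or_gt.resolve_left h⟩

lemma edgeBetween_eq_iff {a b c d : Fin n} (hab : a ≠ b) (hcd : c ≠ d) :
    edgeBetween hab = edgeBetween hcd ↔ (a = c ∧ b = d) ∨ (a = d ∧ b = c) := by
  have := hab.lt_or_gt
  have := hcd.lt_or_gt
  unfold edgeBetween
  split_ifs <;>
    simp only [Subtype.mk.injEq, Prod.mk.injEq, Fin.ext_iff, ← Fin.val_fin_lt] at * <;> omega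

lemma tournamentOf_iff (f : Edge n → Bool) {a b : Fin n} (hab : a ≠ b) :
    tournamentOf f a b ↔ f (edgeBetween hab) = decide (a < b) := by
  rcases hab.lt_or_gt with h | h <;> simp [tournamentOf, edgeBetween, h, asymm h]

variable {u v : Fin n}

def twoPathEdge (p : {w : Fin n // w ≠ u ∧ w ≠ v} × Bool) : Edge n :=
  if p.2 then edgeBetween p.1.2.2.symm else edgeBetween p.1.2.1

lemma twoPathEdge_injective (huv : u ≠ v) : Injective (twoPathEdge (u := u) (v := v)) := by
  rintro ⟨⟨w, hwu, hwv⟩, _ | _⟩ ⟨⟨w', hwu', hwv'⟩, _ | _⟩ h <;>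
    simp only [twoPathEdge, Bool.false_eq_true, if_true, if_false, edgeBetween_eq_iff] at h <;>
    aesop

lemma tournamentOf_two_path_iff (f : Edge n → Bool) (w : {w : Fin n // w ≠ u ∧ w ≠ v}) :
    tournamentOf f v w ∧ tournamentOf f w u ↔
      (fun k => f (twoPathEdge (w, k))) =
        fun k => if k then decide (v < w) else decide (w < u) := by
  rw [funext_iff, Bool.forall_bool, tournamentOf_iff f w.2.2.symm, tournamentOf_iff f w.2.1]
  simp only [twoPathEdge, if_true, Bool.false_eq_true, if_false]
  exact and_comm

theorem ncard_not_comp_mul_le (huv : u ≠ v) :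
    {f : Edge n → Bool | ¬ Relation.Comp (tournamentOf f) (tournamentOf f) v u}.ncard *
        4 ^ (n - 2) ≤
      3 ^ (n - 2) * 2 ^ n.choose 2 := by
  set J := {w : Fin n // w ≠ u ∧ w ≠ v}
  let A : J → Set (Bool → Bool) := fun w =>
    {fun k => if k then decide (v < w) else decide (w < u)}ᶜ
  have hJ : Fintype.card J = n - 2 := by
    have : ({w | w ≠ u ∧ w ≠ v} : Finset (Fin n)) = {u, v}ᶜ := by ext; simp
    rw [Fintype.card_subtype, this, card_compl, card_pair huv, Fintype.card_fin]
  have hA : ∀ w, (A w).ncard = 3 := fun w => by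
    rw [Set.ncard_compl, Set.ncard_singleton]
    simp
  have hsub : {f : Edge n → Bool | ¬ Relation.Comp (tournamentOf f) (tournamentOf f) v u} ⊆
      {f | ∀ w, (fun k => f (twoPathEdge (w, k))) ∈ A w} :=
    fun f hf w hw => hf ⟨w, (tournamentOf_two_path_iff f w).mpr hw⟩
  calc _ ≤ {f : Edge n → Bool | ∀ w, (fun k => f (twoPathEdge (w, k))) ∈ A w}.ncard *
        Fintype.card Bool ^ (Fintype.card J * Fintype.card Bool) := by
        rw [hJ, Fintype.card_bool, pow_mul']
        exact Nat.mul_le_mul_right _ (Set.ncard_le_ncard hsub)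
    _ ≤ (∏ w, (A w).ncard) * Fintype.card Bool ^ Fintype.card (Edge n) :=
        ncard_forall_restrict_mem_mul_le (twoPathEdge_injective huv) A
    _ = 3 ^ (n - 2) * 2 ^ n.choose 2 := by
        simp only [hA, prod_const, card_univ, hJ, Fintype.card_bool, card_edge]

theorem ncard_not_forall_isKing_mul_le (n : ℕ) :
    {f : Edge n → Bool | ¬ ∀ v, IsKing (tournamentOf f) v}.ncard * 4 ^ (n - 2) ≤
      n ^ 2 * 3 ^ (n - 2) * 2 ^ n.choose 2 := by
  let noComp : Fin n × Fin n → Set (Edge n → Bool) := fun p =>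
    {f | ¬ Relation.Comp (tournamentOf f) (tournamentOf f) p.2 p.1}
  have hcover : {f : Edge n → Bool | ¬ ∀ v, IsKing (tournamentOf f) v} ⊆
      ⋃ p ∈ (univ : Finset (Fin n)).offDiag, noComp p := by
    intro f hf
    obtain ⟨v, hv⟩ := not_forall.mp hf
    obtain ⟨u, huv, hcomp⟩ :
        ∃ u, u ≠ v ∧ ¬ Relation.Comp (tournamentOf f) (tournamentOf f) v u := by
      simp only [IsKing, not_forall, not_or] at hv
      obtain ⟨u, huv, -, hcomp⟩ := hv
      exact ⟨u, huv, hcomp⟩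
    exact Set.mem_biUnion (x := (u, v)) (by simpa using huv) hcomp
  calc _ ≤ (∑ p ∈ univ.offDiag, (noComp p).ncard) * 4 ^ (n - 2) :=
        Nat.mul_le_mul_right _ ((Set.ncard_le_ncard hcover).trans (set_ncard_biUnion_le _ noComp))
    _ = ∑ p ∈ univ.offDiag, (noComp p).ncard * 4 ^ (n - 2) := sum_mul _ _ _
    _ ≤ ∑ p ∈ (univ : Finset (Fin n)).offDiag, 3 ^ (n - 2) * 2 ^ n.choose 2 :=
        sum_le_sum fun p hp => ncard_not_comp_mul_le (mem_offDiag.mp hp).2.2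
    _ ≤ n ^ 2 * 3 ^ (n - 2) * 2 ^ n.choose 2 := by
        rw [sum_const, smul_eq_mul, offDiag_card, card_univ, Fintype.card_fin, mul_assoc, sq]
        exact Nat.mul_le_mul_right _ (Nat.sub_le _ _)

theorem one_sub_le_ncard_forall_isKing_div (n : ℕ) :
    1 - (n : ℝ) ^ 2 * (3 / 4) ^ (n - 2) ≤
      ({f : Edge n → Bool | ∀ v, IsKing (tournamentOf f) v}.ncard : ℝ) / 2 ^ n.choose 2 := by
  set kings := {f : Edge n → Bool | ∀ v, IsKing (tournamentOf f) v}
  have htotal : (kings.ncard : ℝ) + kingsᶜ.ncard = 2 ^ n.choose 2 := by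
    rw [← Nat.cast_add, Set.ncard_add_ncard_compl, card_edge_fun, Nat.cast_pow, Nat.cast_ofNat]
  have hbad : (kingsᶜ.ncard : ℝ) ≤ n ^ 2 * (3 / 4) ^ (n - 2) * 2 ^ n.choose 2 := by
    have h := ncard_not_forall_isKing_mul_le n
    rw [div_pow, mul_div_assoc', div_mul_eq_mul_div, le_div_iff₀ (by positivity)]
    exact_mod_cast h
  rw [le_div_iff₀ (by positivity)]
  linarith

theorem ncard_forall_isKing_div_le_one (n : ℕ) :
    ({f : Edge n → Bool | ∀ v, IsKing (tournamentOf f) v}.ncard : ℝ) / 2 ^ n.choose 2 ≤ 1 :=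
  div_le_one_of_le₀ (mod_cast (Set.ncard_le_card _).trans_eq (card_edge_fun n)) (by positivity)

end Tournament

/-- In a uniformly random tournament on `n` labeled vertices, the probability that every
vertex is a king tends to `1` as `n → ∞`. The probability is expressed as the fraction of
the `2 ^ (n choose 2)` equally likely orientations in which all vertices are kings. -/
theorem random_tournament_all_kings :
    Filter.Tendsto
      (fun n : ℕ =>
        (Nat.card {f : {p : Fin n × Fin n // p.1 < p.2} → Bool //
            ∀ v : Fin n, IsKing (tournamentOf f) v} : ℝ) / (2 ^ n.choose 2 : ℝ))
      Filter.atTop (nhds 1) := by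
  have hlower : Tendsto (fun n : ℕ => 1 - (n : ℝ) ^ 2 * (3 / 4) ^ (n - 2)) atTop (𝓝 1) := by
    simpa using (tendsto_pow_const_mul_const_pow_sub_of_abs_lt_one 2 2 (r := 3 / 4) (by norm_num)
      (by norm_num [abs_of_pos])).const_sub 1
  refine tendsto_of_tendsto_of_tendsto_of_le_of_le hlower tendsto_const_nhds
    one_sub_le_ncard_forall_isKing_div ncard_forall_isKing_div_le_one
end

section
/- Let T be a finite tournament on vertex set V, let K ⊆ V, and let K² be the set of all vertices in V \ K that are within distance at most 2 (in T) of every vertex of K. Then every king of the subtournament induced on K² is a king of T. -/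
/-- `v` is within distance at most 2 of `u`. -/
def Within2 {V : Type*} (r : V → V → Prop) (v u : V) : Prop :=
  v = u ∨ r v u ∨ ∃ w, r v w ∧ r w u

/-- A king of the subtournament induced on `S`. -/
def IsKingOn {V : Type*} (r : V → V → Prop) (S : Set V) (v : V) : Prop :=
  v ∈ S ∧ ∀ u ∈ S, u ≠ v → r v u ∨ ∃ w ∈ S, r v w ∧ r w u

/-!
Let `v` be a king of `K²` and `u` any other vertex. If `u ∈ K ∪ K²` then `v` reaches `u` in
at most two steps directly. Otherwise some `k ∈ K` is not within distance 2 of `u`, while `v` is,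
say along `v = k`, `v → k` or `v → w → k`. In a tournament, `u` failing to reach `k` in two steps
forces `k → u`, resp. `w → u`, so `v` reaches `u` in at most two steps.
-/

section

variable {V : Type*} {r : V → V → Prop}

theorem IsTournament.rel_of_not_rel_s9 (hT : IsTournament r) {u v : V} (hne : u ≠ v)
    (h : ¬ r u v) : r v u :=
  (hT.2 v u hne.symm).mpr h

theorem Within2.rel_or_exists_of_ne {v u : V} (h : Within2 r v u) (hne : u ≠ v) :
    r v u ∨ ∃ w, r v w ∧ r w u := by
  rcases h with rfl | h
  · exact absurd rfl hne
  · exact h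

theorem IsTournament.rel_or_exists_of_within2_of_not_within2 (hT : IsTournament r)
    {v u k : V} (hv : Within2 r v k) (hu : ¬ Within2 r u k) :
    r v u ∨ ∃ w, r v w ∧ r w u := by
  simp only [Within2, not_or, not_exists, not_and] at hu
  obtain ⟨huk, hnuk, hnuwk⟩ := hu
  rcases hv with rfl | hvk | ⟨w, hvw, hwk⟩
  · exact Or.inl (hT.rel_of_not_rel_s9 huk hnuk)
  · exact Or.inr ⟨k, hvk, hT.rel_of_not_rel_s9 huk hnuk⟩
  · have huw : u ≠ w := by
      rintro rfl
      exact hnuk hwk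
    exact Or.inr ⟨w, hvw, hT.rel_of_not_rel_s9 huw fun huw' => hnuwk w huw' hwk⟩

end

theorem king_of_Ksq_is_king_general {V : Type*}
    (r : V → V → Prop) (hT : IsTournament r) (K : Set V) (v : V)
    (hv : IsKingOn r {x : V | x ∉ K ∧ ∀ u ∈ K, Within2 r x u} v) :
    IsKing r v := by
  obtain ⟨⟨-, hvK⟩, hking⟩ := hv
  intro u hu
  by_cases huK : u ∈ K
  · exact (hvK u huK).rel_or_exists_of_ne hu
  by_cases huKsq : ∀ k ∈ K, Within2 r u k
  · obtain h | ⟨w, -, hvw, hwu⟩ := hking u ⟨huK, huKsq⟩ hu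
    exacts [Or.inl h, Or.inr ⟨w, hvw, hwu⟩]
  push Not at huKsq
  obtain ⟨k, hk, hnot⟩ := huKsq
  exact hT.rel_or_exists_of_within2_of_not_within2 (hvK k hk) hnot

theorem king_of_Ksq_is_king {V : Type*} [Fintype V]
    (r : V → V → Prop) (hT : IsTournament r) (K : Set V) (v : V)
    (hv : IsKingOn r {x : V | x ∉ K ∧ ∀ u ∈ K, Within2 r x u} v) :
    IsKing r v :=
  king_of_Ksq_is_king_general r hT K v hv
end

section
/- For every m ≥ 1 such that there exists a tournament on m vertices in which every vertex is a king, there exists a tournament T on 3m+3 vertices with the following properties: T has exactly 3 kings, and there exist at least m² (unordered) vertex pairs {x,y} such that reversing the orientation of the single edge between x and y yields a tournament with at least 4 kings. -/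
/-- Reverse the orientation of the single edge between `x` and `y`, leaving all
other edges unchanged. -/
def flipEdge {V : Type*} (r : V → V → Prop) (x y : V) : V → V → Prop :=
  fun a b =>
    ((a = x ∧ b = y) ∨ (a = y ∧ b = x) → ¬ r a b) ∧
    (¬ ((a = x ∧ b = y) ∨ (a = y ∧ b = x)) → r a b)

open Function

section Relabel

variable {α β : Type*} {r : β → β → Prop}

theorem IsTournament.onFun (h : IsTournament r) {f : α → β} (hf : Injective f) :
    IsTournament (r on f) :=
  ⟨fun a => h.1 (f a), fun a b hab => h.2 (f a) (f b) (hf.ne hab)⟩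

theorem isKing_onFun (e : α ≃ β) {a : α} : IsKing (r on e) a ↔ IsKing r (e a) := by
  simp only [IsKing, onFun, e.surjective.forall, e.surjective.exists, ne_eq,
    EmbeddingLike.apply_eq_iff_eq]

theorem card_isKing_onFun (e : α ≃ β) :
    Nat.card {a // IsKing (r on e) a} = Nat.card {b // IsKing r b} :=
  Nat.card_congr (e.subtypeEquiv fun _ => isKing_onFun e)

theorem flipEdge_onFun {f : α → β} (hf : Injective f) (x y : α) :
    flipEdge (r on f) x y = (flipEdge r (f x) (f y) on f) := by
  ext a b
  simp only [flipEdge, onFun, hf.eq_iff]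

end Relabel

variable {V : Type*}

theorem flipEdge_comm (r : V → V → Prop) (x y : V) : flipEdge r x y = flipEdge r y x := by
  ext a b
  simp only [flipEdge, or_comm]

theorem flipEdge_iff_of_left_ne {r : V → V → Prop} {x y a : V} (hx : a ≠ x) (hy : a ≠ y)
    (b : V) : flipEdge r x y a b ↔ r a b := by
  simp [flipEdge, hx, hy]

def IsKingSensitive (r : V → V → Prop) (n : ℕ) : Prop :=
  IsTournament r ∧ Nat.card {v // IsKing r v} = 3 ∧
    ∃ P : Finset (Sym2 V), n ≤ P.card ∧
      ∀ x y, s(x, y) ∈ P → x ≠ y ∧ 4 ≤ Nat.card {v // IsKing (flipEdge r x y) v}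

theorem IsKingSensitive.onEquiv {α : Type*} {r : V → V → Prop} {n : ℕ}
    (h : IsKingSensitive r n) (e : α ≃ V) : IsKingSensitive (r on e) n := by
  obtain ⟨hr, hkings, P, hP, hflip⟩ := h
  refine ⟨hr.onFun e.injective, (card_isKing_onFun e).trans hkings,
    P.map e.symm.toEmbedding.sym2Map, by simpa using hP, fun x y hxy => ?_⟩
  have hexy : s(e x, e y) ∈ P := by
    rw [← Finset.mem_map' e.symm.toEmbedding.sym2Map]
    simpa using hxy
  obtain ⟨hne, hcard⟩ := hflip _ _ hexy
  exact ⟨e.injective.ne_iff.1 hne, by rwa [flipEdge_onFun e.injective, card_isKing_onFun]⟩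

section CyclicExtension

variable {q : V → V → Prop}

/-- `.inl i` is the vertex `aᵢ` and `.inr (i, v)` is the copy of `v` in `Bᵢ`. -/
def cyclicExtension (q : V → V → Prop) : Fin 3 ⊕ Fin 3 × V → Fin 3 ⊕ Fin 3 × V → Prop
  | .inl i, .inl j => j = i + 1
  | .inl i, .inr (j, _) => j = i ∨ j = i + 1
  | .inr (i, _), .inl j => j = i + 1
  | .inr (i, v), .inr (j, w) => i = j ∧ q v w ∨ j = i + 1

theorem isTournament_cyclicExtension (hq : IsTournament q) :
    IsTournament (cyclicExtension q) := by
  refine ⟨?_, ?_⟩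
  · rintro (i | ⟨i, v⟩) <;> simp [cyclicExtension, hq.1]
  · rintro (i | ⟨i, v⟩) (j | ⟨j, w⟩) h <;> fin_cases i <;> fin_cases j <;>
      simp_all [cyclicExtension, hq.2]

theorem isKing_inl_of_forall_iff {r : Fin 3 ⊕ Fin 3 × V → Fin 3 ⊕ Fin 3 × V → Prop}
    (hr : ∀ i b, r (.inl i) b ↔ cyclicExtension q (.inl i) b) (i : Fin 3) :
    IsKing r (.inl i) := by
  intro u hu
  by_cases h : cyclicExtension q (.inl i) u
  · exact .inl ((hr i u).2 h)
  · refine .inr ⟨.inl (i + 1), (hr i _).2 rfl, (hr _ u).2 ?_⟩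
    rcases u with j | ⟨j, w⟩ <;> simp [cyclicExtension] at h hu ⊢ <;> omega

theorem not_isKing_inr (i : Fin 3) (v : V) : ¬ IsKing (cyclicExtension q) (.inr (i, v)) := by
  intro h
  rcases h (.inl i) Sum.inl_ne_inr with h | ⟨w, h₁, h₂⟩
  · simp [cyclicExtension] at h
  · rcases w with j | ⟨j, u⟩ <;> simp [cyclicExtension] at h₁ h₂ <;> omega

theorem isKing_cyclicExtension_iff {u : Fin 3 ⊕ Fin 3 × V} :
    IsKing (cyclicExtension q) u ↔ u ∈ Set.range Sum.inl := by
  constructor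
  · rcases u with i | ⟨i, v⟩
    · exact fun _ => ⟨i, rfl⟩
    · exact fun h => (not_isKing_inr i v h).elim
  · rintro ⟨i, rfl⟩
    exact isKing_inl_of_forall_iff (fun _ _ => Iff.rfl) i

theorem card_isKing_cyclicExtension : Nat.card {u // IsKing (cyclicExtension q) u} = 3 := by
  rw [Nat.card_congr (Equiv.subtypeEquivRight fun _ => isKing_cyclicExtension_iff),
    Nat.card_range_of_injective Sum.inl_injective, Nat.card_fin]

theorem isKing_flipEdge_cyclicExtension [Nonempty V] (hkq : ∀ v, IsKing q v) (v w : V) :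
    IsKing (flipEdge (cyclicExtension q) (.inr (0, v)) (.inr (1, w))) (.inr (1, w)) := by
  obtain ⟨z⟩ := ‹Nonempty V›
  rintro (j | ⟨j, u⟩) hu <;> fin_cases j
  · exact .inr ⟨.inr (2, z), by simp [flipEdge, cyclicExtension]⟩
  · exact .inr ⟨.inr (0, v), by simp [flipEdge, cyclicExtension]⟩
  · exact .inl (by simp [flipEdge, cyclicExtension])
  · exact .inr ⟨.inr (2, z), by simp [flipEdge, cyclicExtension]⟩
  · rcases hkq w u (by rintro rfl; exact hu rfl) with h | ⟨z', h₁, h₂⟩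
    · exact .inl (by simp [flipEdge, cyclicExtension, h])
    · exact .inr ⟨.inr (1, z'), by simp [flipEdge, cyclicExtension, h₁, h₂]⟩
  · exact .inl (by simp [flipEdge, cyclicExtension])

theorem four_le_card_isKing_flipEdge_cyclicExtension [Finite V] [Nonempty V]
    (hkq : ∀ v, IsKing q v) (v w : V) :
    4 ≤ Nat.card {u // IsKing (flipEdge (cyclicExtension q) (.inr (0, v)) (.inr (1, w))) u} := by
  let kings : Fin 3 ⊕ Unit → Fin 3 ⊕ Fin 3 × V := Sum.elim Sum.inl fun _ => .inr (1, w)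
  have hkings : ∀ k, IsKing (flipEdge (cyclicExtension q) (.inr (0, v)) (.inr (1, w))) (kings k)
    | .inl i => isKing_inl_of_forall_iff
        (fun i _ => flipEdge_iff_of_left_ne Sum.inl_ne_inr Sum.inl_ne_inr _) i
    | .inr _ => isKing_flipEdge_cyclicExtension hkq v w
  have hinj : kings.Injective :=
    Sum.inl_injective.sumElim (fun _ _ _ => rfl) fun _ _ => Sum.inl_ne_inr
  calc 4 = Nat.card (Fin 3 ⊕ Unit) := by simp
    _ ≤ _ := Nat.card_le_card_of_injective (fun k => ⟨kings k, hkings k⟩)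
      fun _ _ h => hinj (congrArg Subtype.val h)

theorem isKingSensitive_cyclicExtension [Fintype V] [Nonempty V] (hq : IsTournament q)
    (hkq : ∀ v, IsKing q v) : IsKingSensitive (cyclicExtension q) (Fintype.card V ^ 2) := by
  let pair : V × V ↪ Sym2 (Fin 3 ⊕ Fin 3 × V) :=
    ⟨fun p => s(.inr (0, p.1), .inr (1, p.2)), fun p p' h => by simpa [Prod.ext_iff] using h⟩
  refine ⟨isTournament_cyclicExtension hq, card_isKing_cyclicExtension,
    Finset.univ.map pair, by simp [sq], fun x y hxy => ?_⟩
  obtain ⟨⟨v, w⟩, -, hvw⟩ := Finset.mem_map.1 hxy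
  have hne : (.inr (0, v) : Fin 3 ⊕ Fin 3 × V) ≠ .inr (1, w) := by simp
  have hfour := four_le_card_isKing_flipEdge_cyclicExtension hkq v w
  rcases Sym2.eq_iff.1 hvw with ⟨rfl, rfl⟩ | ⟨rfl, rfl⟩
  · exact ⟨hne, hfour⟩
  · exact ⟨hne.symm, flipEdge_comm (cyclicExtension q) _ _ ▸ hfour⟩

end CyclicExtension

theorem sensitive_tournament_exists (m : ℕ) (hm : 1 ≤ m)
    (hall : ∃ r : Fin m → Fin m → Prop, IsTournament r ∧ ∀ v : Fin m, IsKing r v) :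
    ∃ r : Fin (3 * m + 3) → Fin (3 * m + 3) → Prop,
      IsTournament r ∧
      Nat.card {v : Fin (3 * m + 3) // IsKing r v} = 3 ∧
      ∃ P : Finset (Sym2 (Fin (3 * m + 3))),
        m ^ 2 ≤ P.card ∧
        ∀ x y : Fin (3 * m + 3), s(x, y) ∈ P →
          x ≠ y ∧ 4 ≤ Nat.card {v : Fin (3 * m + 3) // IsKing (flipEdge r x y) v} := by
  obtain ⟨q, hq, hkq⟩ := hall
  have : Nonempty (Fin m) := Fin.pos_iff_nonempty.1 hm
  have hcard : Fintype.card (Fin 3 ⊕ Fin 3 × Fin m) = 3 * m + 3 := by simp; ring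
  have h := isKingSensitive_cyclicExtension hq hkq
  rw [Fintype.card_fin] at h
  exact ⟨_, h.onEquiv (Fintype.equivFinOfCardEq hcard).symm⟩
end
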